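/- Let b > 0, λ, μ ∈ ℝ with Δ := λ² - 4μ > 0, and define c = λ²b/2 - 2bμ and u(x,t) = (1/2)√(6b)·√Δ · tanh((√Δ/2)(x + ct)). Then u satisfies the modified KdV equation u_t - u² u_x + b u_{xxx} = 0. -/

import Mathlib

/-!
Along the travelling-wave variable, `T = tanh(k ξ)` obeys the Riccati equation `T' = k (1 - T²)`,
so every derivative of `A T` is a polynomial in `T`. Substituting into the equation leaves
`A k (1 - T²) (v - 2 b k² + (6 b k² - A²) T²)`, which vanishes identically once the speed is
`v = 2 b k²` and the amplitude satisfies `A² = 6 b k²`; with `k = √Δ / 2` these are the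
paper's `c` and `(1/2) √(6b) √Δ`.
-/

open Real

theorem Real.hasDerivAt_tanh (y : ℝ) : HasDerivAt tanh (1 - tanh y ^ 2) y := by
  have h := (hasDerivAt_sinh y).div (hasDerivAt_cosh y) (cosh_pos y).ne'
  have hval : (cosh y * cosh y - sinh y * sinh y) / cosh y ^ 2 = 1 - tanh y ^ 2 := by
    rw [tanh_eq_sinh_div_cosh]
    field_simp
  rw [hval] at h
  exact h.congr_of_eventuallyEq (Filter.Eventually.of_forall fun z => tanh_eq_sinh_div_cosh z)

section KinkProfile

variable (k d : ℝ)

theorem hasDerivAt_tanh_affine (y : ℝ) :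
    HasDerivAt (fun w => tanh (k * w + d)) (k * (1 - tanh (k * y + d) ^ 2)) y := by
  exact ((hasDerivAt_tanh (k * y + d)).comp y
    (((hasDerivAt_id y).const_mul k).add_const d)).congr_deriv
      (by ring : _ = k * (1 - tanh (k * y + d) ^ 2))

theorem deriv_tanh_affine :
    deriv (fun w => tanh (k * w + d)) = fun y => k * (1 - tanh (k * y + d) ^ 2) :=
  funext fun y => (hasDerivAt_tanh_affine k d y).deriv

theorem deriv_deriv_tanh_affine :
    deriv (deriv fun w => tanh (k * w + d)) =
      fun y => -2 * k ^ 2 * (tanh (k * y + d) - tanh (k * y + d) ^ 3) := by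
  rw [deriv_tanh_affine]
  funext y
  have h : HasDerivAt (fun y => k * (1 - tanh (k * y + d) ^ 2)) _ y :=
    ((hasDerivAt_const y (1 : ℝ)).sub ((hasDerivAt_tanh_affine k d y).pow 2)).const_mul k
  rw [h.deriv]
  push_cast
  ring

theorem deriv_deriv_deriv_tanh_affine (y : ℝ) :
    deriv (deriv (deriv fun w => tanh (k * w + d))) y =
      -2 * k ^ 3 * (1 - tanh (k * y + d) ^ 2) * (1 - 3 * tanh (k * y + d) ^ 2) := by
  rw [deriv_deriv_tanh_affine]
  have h : HasDerivAt (fun y => -2 * k ^ 2 * (tanh (k * y + d) - tanh (k * y + d) ^ 3)) _ y :=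
    ((hasDerivAt_tanh_affine k d y).sub ((hasDerivAt_tanh_affine k d y).pow 3)).const_mul
      (-2 * k ^ 2)
  rw [h.deriv]
  push_cast
  ring

end KinkProfile

theorem tanh_kink_solves_mKdV (b A k v : ℝ) (hA : A ^ 2 = 6 * b * k ^ 2) (hv : v = 2 * b * k ^ 2)
    (u : ℝ → ℝ → ℝ) (hu : ∀ x t, u x t = A * tanh (k * (x + v * t))) (x t : ℝ) :
    deriv (fun s => u x s) t - (u x t) ^ 2 * deriv (fun y => u y t) x +
      b * deriv (fun y => deriv (fun z => deriv (fun w => u w t) z) y) x = 0 := by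
  have hspace : (fun w => u w t) = fun w => A * tanh (k * w + k * v * t) := by
    funext w; rw [hu]; ring_nf
  have htime : (fun s => u x s) = fun s => A * tanh (k * v * s + k * x) := by
    funext s; rw [hu]; ring_nf
  have hval : u x t = A * tanh (k * x + k * v * t) := by rw [hu]; ring_nf
  have hut : deriv (fun s => u x s) t = A * (k * v * (1 - tanh (k * x + k * v * t) ^ 2)) := by
    rw [htime, ((hasDerivAt_tanh_affine (k * v) (k * x) t).const_mul A).deriv]
    ring_nf
  have hux : deriv (fun y => u y t) x = A * (k * (1 - tanh (k * x + k * v * t) ^ 2)) := by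
    rw [hspace, ((hasDerivAt_tanh_affine k (k * v * t) x).const_mul A).deriv]
  have huxxx : deriv (fun y => deriv (fun z => deriv (fun w => u w t) z) y) x =
      A * (-2 * k ^ 3 * (1 - tanh (k * x + k * v * t) ^ 2) *
        (1 - 3 * tanh (k * x + k * v * t) ^ 2)) := by
    simp only [hspace, deriv_const_mul_field']
    rw [deriv_deriv_deriv_tanh_affine]
  rw [hut, hval, hux, huxxx]
  set T := tanh (k * x + k * v * t)
  linear_combination A * k * (1 - T ^ 2) * hv - A * k * T ^ 2 * (1 - T ^ 2) * hA

theorem stmt11 (b lam mu c : ℝ) (hb : b > 0) (hd : lam ^ 2 - 4 * mu > 0)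
    (hc : c = lam ^ 2 * b / 2 - 2 * b * mu)
    (u : ℝ → ℝ → ℝ)
    (hu : ∀ x t : ℝ, u x t = 1 / 2 * Real.sqrt (6 * b) * Real.sqrt (lam ^ 2 - 4 * mu) *
      Real.tanh (Real.sqrt (lam ^ 2 - 4 * mu) / 2 * (x + c * t))) :
    ∀ x t : ℝ,
      deriv (fun s => u x s) t - (u x t) ^ 2 * deriv (fun y => u y t) x +
        b * deriv (fun y => deriv (fun z => deriv (fun w => u w t) z) y) x = 0 := by
  have h6b : √(6 * b) ^ 2 = 6 * b := sq_sqrt (by positivity)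
  have hΔ : √(lam ^ 2 - 4 * mu) ^ 2 = lam ^ 2 - 4 * mu := sq_sqrt hd.le
  exact tanh_kink_solves_mKdV b (1 / 2 * √(6 * b) * √(lam ^ 2 - 4 * mu))
    (√(lam ^ 2 - 4 * mu) / 2) c (by linear_combination √(lam ^ 2 - 4 * mu) ^ 2 / 4 * h6b)
    (by linear_combination hc - b / 2 * hΔ) u hu
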